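/- Let g ∈ ℂ^N have all entries nonzero and f ∈ ℂ^N with f_0 > 0, and set R = diag(g) T(f) diag(conj(g)). Then ‖g‖² ‖f‖ = (∑_{n=0}^{N-1} R_{n,n}) · sqrt( 1 + ∑_{k=1}^{N-1} (1/(N-k)) ∑_{n=0}^{N-k-1} |R_{n+k,n}|² / (R_{n+k,n+k} R_{n,n}) ). -/

import Mathlib

open Complex Matrix

/-- The Hermitian Toeplitz matrix generated by `f`. -/
noncomputable def ToepMat {N : ℕ} (f : Fin N → ℂ) : Matrix (Fin N) (Fin N) ℂ :=
  fun m n =>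
    if (n : ℕ) ≤ (m : ℕ) then
      f ⟨(m : ℕ) - n, Nat.lt_of_le_of_lt (Nat.sub_le _ _) m.isLt⟩
    else
      starRingEnd ℂ (f ⟨(n : ℕ) - m, Nat.lt_of_le_of_lt (Nat.sub_le _ _) n.isLt⟩)

/-!
Every entry of `R` below the diagonal factors as `R_{n+k,n} = g_{n+k} f_k conj(g_n)`, and its
diagonal as `R_{n,n} = |g_n|² f_0`. Hence the normalised correlation
`|R_{n+k,n}|² / (R_{n+k,n+k} R_{n,n}) = |f_k|² / f_0²` does not depend on `n`, so averaging over `n`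
and summing over `k` gives `‖f‖² / f_0²`, while the trace of `R` is `‖g‖² f_0`.
-/

theorem ToepMat_apply_add {N : ℕ} (f : Fin N → ℂ) {n k : ℕ} (h : n + k < N) :
    ToepMat f ⟨n + k, h⟩ ⟨n, by omega⟩ = f ⟨k, by omega⟩ := by
  simp only [ToepMat, Nat.le_add_right, if_true, Nat.add_sub_cancel_left]

theorem Matrix.diagonal_mul_mul_diagonal_apply {m α : Type*} [Fintype m] [DecidableEq m]
    [NonUnitalNonAssocSemiring α] (d e : m → α) (M : Matrix m m α) (i j : m) :
    (diagonal d * M * diagonal e) i j = d i * M i j * e j := by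
  rw [mul_diagonal, diagonal_mul]

section Covariance

variable {N : ℕ} {g f : Fin N → ℂ} {R : Matrix (Fin N) (Fin N) ℂ}

theorem covariance_apply_add
    (hR : R = diagonal g * ToepMat f * diagonal (fun n => starRingEnd ℂ (g n)))
    {n k : ℕ} (h : n + k < N) :
    R ⟨n + k, h⟩ ⟨n, by omega⟩ = g ⟨n + k, h⟩ * f ⟨k, by omega⟩ * starRingEnd ℂ (g ⟨n, by omega⟩) := by
  rw [hR, diagonal_mul_mul_diagonal_apply, ToepMat_apply_add]

theorem re_covariance_apply_self (hN : 0 < N)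
    (hR : R = diagonal g * ToepMat f * diagonal (fun n => starRingEnd ℂ (g n))) (n : Fin N) :
    (R n n).re = ‖g n‖ ^ 2 * (f ⟨0, hN⟩).re := by
  have := covariance_apply_add hR (n := n) (k := 0) n.isLt
  simp only [Nat.add_zero, Fin.eta] at this
  rw [this, mul_right_comm, mul_conj, re_ofReal_mul, normSq_eq_norm_sq]

theorem norm_sq_covariance_apply_add
    (hR : R = diagonal g * ToepMat f * diagonal (fun n => starRingEnd ℂ (g n)))
    {n k : ℕ} (h : n + k < N) :
    ‖R ⟨n + k, h⟩ ⟨n, by omega⟩‖ ^ 2 =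
      ‖g ⟨n + k, h⟩‖ ^ 2 * ‖f ⟨k, by omega⟩‖ ^ 2 * ‖g ⟨n, by omega⟩‖ ^ 2 := by
  rw [covariance_apply_add hR h, norm_mul, norm_mul, RCLike.norm_conj, mul_pow, mul_pow]

theorem normalized_correlation_eq (hN : 0 < N) (hg : ∀ n, g n ≠ 0)
    (hR : R = diagonal g * ToepMat f * diagonal (fun n => starRingEnd ℂ (g n)))
    {n k : ℕ} (h : n + k < N) :
    ‖R ⟨n + k, h⟩ ⟨n, by omega⟩‖ ^ 2 /
        ((R ⟨n + k, h⟩ ⟨n + k, h⟩).re * (R ⟨n, by omega⟩ ⟨n, by omega⟩).re) =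
      ‖f ⟨k, by omega⟩‖ ^ 2 / (f ⟨0, hN⟩).re ^ 2 := by
  have hg₁ := norm_ne_zero_iff.mpr (hg ⟨n + k, h⟩)
  have hg₂ := norm_ne_zero_iff.mpr (hg ⟨n, by omega⟩)
  rw [norm_sq_covariance_apply_add hR h, re_covariance_apply_self hN hR,
    re_covariance_apply_self hN hR]
  field_simp

end Covariance

theorem average_range_sub_eq_of_forall_eq {N k : ℕ} (hk : k < N) (F : (n : ℕ) → n + k < N → ℝ)
    {a : ℝ} (hF : ∀ n h, F n h = a) :
    1 / ((N : ℝ) - k) * ∑ n ∈ Finset.range (N - k), (if h : n + k < N then F n h else 0) = a := by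
  have hsum : ∑ n ∈ Finset.range (N - k), (if h : n + k < N then F n h else 0) =
      ((N - k : ℕ) : ℝ) * a := by
    rw [Finset.sum_congr rfl fun n hn => by rw [dif_pos (by simp at hn; omega), hF],
      Finset.sum_const, Finset.card_range, nsmul_eq_mul]
  have hNk : (N : ℝ) - k ≠ 0 := sub_ne_zero.mpr (by exact_mod_cast hk.ne')
  rw [hsum, Nat.cast_sub hk.le]
  field_simp

theorem Fin.sum_univ_eq_add_sum_Ico {M : Type*} [AddCommMonoid M] {N : ℕ} (hN : 0 < N)
    (u : Fin N → M) :
    ∑ k : Fin N, u k = u ⟨0, hN⟩ + ∑ k ∈ Finset.Ico 1 N, if h : k < N then u ⟨k, h⟩ else 0 := by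
  have := Finset.sum_eq_sum_Ico_succ_bot hN (fun k => if h : k < N then u ⟨k, h⟩ else 0)
  rw [dif_pos hN, ← Finset.range_eq_Ico, Finset.sum_range] at this
  simpa using this

theorem stmt2 {N : ℕ} (hN : 0 < N)
    (g f : Fin N → ℂ) (hg : ∀ n, g n ≠ 0)
    (hf0 : (f ⟨0, hN⟩).im = 0) (hf0pos : 0 < (f ⟨0, hN⟩).re)
    (R : Matrix (Fin N) (Fin N) ℂ)
    (hR : R = Matrix.diagonal g * ToepMat f * Matrix.diagonal (fun n => starRingEnd ℂ (g n))) :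
    (∑ n : Fin N, ‖g n‖^2) * Real.sqrt (∑ k : Fin N, ‖f k‖^2) =
      (∑ n : Fin N, (R n n).re) *
      Real.sqrt (1 + ∑ k ∈ Finset.Ico 1 N, (1 / ((N : ℝ) - k)) *
        ∑ n ∈ Finset.range (N - k), if h : n + k < N then
          ‖R ⟨n + k, h⟩ ⟨n, by omega⟩‖^2 /
            ((R ⟨n + k, h⟩ ⟨n + k, h⟩).re * (R ⟨n, by omega⟩ ⟨n, by omega⟩).re)
        else 0) := by
  set c := (f ⟨0, hN⟩).re
  have hf0_norm : ‖f ⟨0, hN⟩‖ = c := by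
    rw [← re_add_im (f ⟨0, hN⟩), hf0, ofReal_zero, zero_mul, add_zero, norm_real,
      Real.norm_of_nonneg hf0pos.le]
  have htrace : ∑ n : Fin N, (R n n).re = (∑ n : Fin N, ‖g n‖ ^ 2) * c := by
    rw [Finset.sum_mul]
    exact Finset.sum_congr rfl fun n _ => re_covariance_apply_self hN hR n
  have hcorr : 1 + ∑ k ∈ Finset.Ico 1 N, (1 / ((N : ℝ) - k)) *
        ∑ n ∈ Finset.range (N - k), (if h : n + k < N then
          ‖R ⟨n + k, h⟩ ⟨n, by omega⟩‖^2 /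
            ((R ⟨n + k, h⟩ ⟨n + k, h⟩).re * (R ⟨n, by omega⟩ ⟨n, by omega⟩).re)
        else 0) = (∑ k : Fin N, ‖f k‖ ^ 2) / c ^ 2 := by
    rw [Fin.sum_univ_eq_add_sum_Ico hN, add_div, hf0_norm, div_self (by positivity),
      Finset.sum_div]
    refine congrArg _ (Finset.sum_congr rfl fun k hk => ?_)
    have hkN := (Finset.mem_Ico.mp hk).2
    rw [dif_pos hkN]
    exact average_range_sub_eq_of_forall_eq hkN _ fun n h => normalized_correlation_eq hN hg hR h
  rw [htrace, hcorr, Real.sqrt_div' _ (by positivity), Real.sqrt_sq hf0pos.le]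
  field_simp
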